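/- arXiv:2411.09573 — 6 statements merged into one kernel-verified Lean document; each statement's English description precedes it below -/
import Mathlib

section
/- Let H be a finite arrangement of hyperplanes in ℂP^n with positive real weights a_H. If the inequality ∑_{H ⊇ L} a_H < codim L holds for every nonempty proper intersection subspace L of the arrangement that is irreducible, then it holds for every nonempty proper intersection subspace L, and in fact for every nonempty proper linear subspace L ⊂ ℂP^n. -/
open scoped Classical

/-- Codimension of a linear subspace of `ℂ^{n+1}` (equivalently, of the corresponding
projective subspace of `ℂP^n`). -/
noncomputable def codim (n : ℕ) (L : Submodule ℂ (Fin (n + 1) → ℂ)) : ℕ :=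
  (n + 1) - Module.finrank ℂ L

/-- `L` is an intersection of members of the arrangement `𝓗` (the empty intersection is `⊤`). -/
def IsIntersection (n : ℕ) (𝓗 : Finset (Submodule ℂ (Fin (n + 1) → ℂ)))
    (L : Submodule ℂ (Fin (n + 1) → ℂ)) : Prop :=
  ∃ S ⊆ 𝓗, L = S.inf id

/-- The localization `𝓗_L`: hyperplanes of the arrangement containing `L`. -/
noncomputable def localization (n : ℕ) (𝓗 : Finset (Submodule ℂ (Fin (n + 1) → ℂ)))
    (L : Submodule ℂ (Fin (n + 1) → ℂ)) : Finset (Submodule ℂ (Fin (n + 1) → ℂ)) :=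
  𝓗.filter fun H => L ≤ H

/-- The arrangement admits a nontrivial splitting `𝓗 = 𝓗₁ ⊎ 𝓗₂` whose centres
`T₁ = ⨅ 𝓗₁`, `T₂ = ⨅ 𝓗₂` satisfy `T₁ + T₂ = ℂP^n` (linearly, `T₁ ⊔ T₂ = ⊤`). -/
def HasSplitting (n : ℕ) (𝓗 : Finset (Submodule ℂ (Fin (n + 1) → ℂ))) : Prop :=
  ∃ 𝓗₁ 𝓗₂ : Finset (Submodule ℂ (Fin (n + 1) → ℂ)),
    𝓗₁.Nonempty ∧ 𝓗₂.Nonempty ∧ 𝓗 = 𝓗₁ ∪ 𝓗₂ ∧ (𝓗₁.inf id ⊔ 𝓗₂.inf id) = ⊤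

/-- `L` is a nonempty proper irreducible intersection subspace of the arrangement:
the localized arrangement `𝓗_L` admits no nontrivial splitting. -/
noncomputable def IsIrredSubspace (n : ℕ) (𝓗 : Finset (Submodule ℂ (Fin (n + 1) → ℂ)))
    (L : Submodule ℂ (Fin (n + 1) → ℂ)) : Prop :=
  IsIntersection n 𝓗 L ∧ L ≠ ⊥ ∧ L ≠ ⊤ ∧ ¬HasSplitting n (localization n 𝓗 L)

/-!
If `𝓗_L` splits as `𝓗₁ ∪ 𝓗₂` with centres `T₁ ⊔ T₂ = ⊤`, then `L = T₁ ⊓ T₂` and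
`codim L = codim T₁ + codim T₂`, with both summands positive. Strong induction on the
codimension therefore gives
`∑_{H ⊇ L} a_H ≤ ∑_{H ⊇ T₁} a_H + ∑_{H ⊇ T₂} a_H < codim T₁ + codim T₂ = codim L`.
An arbitrary proper subspace `L` has the same localization as the intersection subspace
`⋂ 𝓗_L ⊇ L`, whose codimension is no larger.
-/

theorem sum_le_sum_add_sum_of_subset_union {ι M : Type*} [AddCommMonoid M] [PartialOrder M]
    [IsOrderedAddMonoid M] [DecidableEq ι] {f : ι → M} {s t u : Finset ι} (h : u ⊆ s ∪ t)
    (hf : ∀ i ∈ s ∪ t, 0 ≤ f i) : ∑ i ∈ u, f i ≤ ∑ i ∈ s, f i + ∑ i ∈ t, f i :=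
  calc ∑ i ∈ u, f i ≤ ∑ i ∈ s ∪ t, f i :=
        Finset.sum_le_sum_of_subset_of_nonneg h fun i hi _ ↦ hf i hi
    _ ≤ ∑ i ∈ s ∪ t, f i + ∑ i ∈ s ∩ t, f i :=
      le_add_of_nonneg_right <| Finset.sum_nonneg fun i hi ↦ hf i (Finset.inter_subset_union hi)
    _ = ∑ i ∈ s, f i + ∑ i ∈ t, f i := Finset.sum_union_inter

section Codim

variable {n : ℕ}

theorem finrank_add_codim (L : Submodule ℂ (Fin (n + 1) → ℂ)) :
    Module.finrank ℂ L + codim n L = n + 1 := by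
  have := Submodule.finrank_le L
  rw [Module.finrank_fin_fun] at this
  unfold codim; omega

theorem codim_pos {L : Submodule ℂ (Fin (n + 1) → ℂ)} (hL : L ≠ ⊤) : 0 < codim n L := by
  have := Submodule.finrank_lt hL
  rw [Module.finrank_fin_fun] at this
  unfold codim; omega

theorem codim_anti {L L' : Submodule ℂ (Fin (n + 1) → ℂ)} (h : L ≤ L') :
    codim n L' ≤ codim n L := by
  have := Submodule.finrank_mono h
  unfold codim; omega

theorem codim_inf_of_sup_eq_top {T₁ T₂ : Submodule ℂ (Fin (n + 1) → ℂ)} (h : T₁ ⊔ T₂ = ⊤) :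
    codim n (T₁ ⊓ T₂) = codim n T₁ + codim n T₂ := by
  have := Submodule.finrank_sup_add_finrank_inf_eq T₁ T₂
  rw [h, finrank_top, Module.finrank_fin_fun] at this
  have := finrank_add_codim T₁
  have := finrank_add_codim T₂
  have := finrank_add_codim (T₁ ⊓ T₂)
  omega

theorem ne_top_of_finrank_eq {H : Submodule ℂ (Fin (n + 1) → ℂ)}
    (hH : Module.finrank ℂ H = n) : H ≠ ⊤ := by
  rintro rfl
  rw [finrank_top, Module.finrank_fin_fun] at hH
  omega

end Codim

section Arrangement

variable {n : ℕ} {𝓗 : Finset (Submodule ℂ (Fin (n + 1) → ℂ))}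

theorem localization_subset (L : Submodule ℂ (Fin (n + 1) → ℂ)) :
    localization n 𝓗 L ⊆ 𝓗 :=
  Finset.filter_subset _ _

theorem le_inf_localization (L : Submodule ℂ (Fin (n + 1) → ℂ)) :
    L ≤ (localization n 𝓗 L).inf id :=
  Finset.le_inf fun _ hH ↦ (Finset.mem_filter.1 hH).2

theorem isIntersection_inf {S : Finset (Submodule ℂ (Fin (n + 1) → ℂ))} (hS : S ⊆ 𝓗) :
    IsIntersection n 𝓗 (S.inf id) :=
  ⟨S, hS, rfl⟩

theorem subset_localization_inf {S : Finset (Submodule ℂ (Fin (n + 1) → ℂ))} (hS : S ⊆ 𝓗) :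
    S ⊆ localization n 𝓗 (S.inf id) :=
  fun _ hH ↦ Finset.mem_filter.2 ⟨hS hH, Finset.inf_le hH⟩

theorem IsIntersection.inf_localization {L : Submodule ℂ (Fin (n + 1) → ℂ)}
    (hL : IsIntersection n 𝓗 L) : (localization n 𝓗 L).inf id = L := by
  obtain ⟨S, hS, rfl⟩ := hL
  exact le_antisymm (Finset.inf_mono (subset_localization_inf hS)) (le_inf_localization _)

theorem localization_inf_localization (L : Submodule ℂ (Fin (n + 1) → ℂ)) :
    localization n 𝓗 ((localization n 𝓗 L).inf id) = localization n 𝓗 L :=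
  Finset.filter_congr fun _ hH ↦ ⟨(le_inf_localization L).trans, fun hLH ↦
    Finset.inf_le (Finset.mem_filter.2 ⟨hH, hLH⟩)⟩

theorem inf_ne_top_of_nonempty (hH : ∀ H ∈ 𝓗, H ≠ ⊤)
    {S : Finset (Submodule ℂ (Fin (n + 1) → ℂ))} (hS : S ⊆ 𝓗) (hne : S.Nonempty) :
    S.inf id ≠ ⊤ := by
  obtain ⟨H, hHS⟩ := hne
  exact fun h ↦ hH H (hS hHS) (top_le_iff.1 (h ▸ Finset.inf_le hHS))

theorem exists_transversal_of_hasSplitting (hH : ∀ H ∈ 𝓗, H ≠ ⊤)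
    {L : Submodule ℂ (Fin (n + 1) → ℂ)} (hL : IsIntersection n 𝓗 L)
    (hs : HasSplitting n (localization n 𝓗 L)) :
    ∃ T₁ T₂, IsIntersection n 𝓗 T₁ ∧ IsIntersection n 𝓗 T₂ ∧ T₁ ≠ ⊤ ∧ T₂ ≠ ⊤ ∧
      T₁ ⊓ T₂ = L ∧ T₁ ⊔ T₂ = ⊤ ∧
      localization n 𝓗 L ⊆ localization n 𝓗 T₁ ∪ localization n 𝓗 T₂ := by
  obtain ⟨S₁, S₂, hne₁, hne₂, hunion, hsup⟩ := hs
  have hS₁ : S₁ ⊆ 𝓗 := (Finset.subset_union_left.trans hunion.ge).trans (localization_subset L)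
  have hS₂ : S₂ ⊆ 𝓗 := (Finset.subset_union_right.trans hunion.ge).trans (localization_subset L)
  refine ⟨_, _, isIntersection_inf hS₁, isIntersection_inf hS₂,
    inf_ne_top_of_nonempty hH hS₁ hne₁, inf_ne_top_of_nonempty hH hS₂ hne₂, ?_, hsup, ?_⟩
  · rw [← Finset.inf_union, ← hunion, hL.inf_localization]
  · rw [hunion]
    exact Finset.union_subset_union (subset_localization_inf hS₁) (subset_localization_inf hS₂)

variable {a : Submodule ℂ (Fin (n + 1) → ℂ) → ℝ}

theorem sum_localization_lt_codim_of_isIntersection (hH : ∀ H ∈ 𝓗, H ≠ ⊤)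
    (ha : ∀ H ∈ 𝓗, 0 ≤ a H)
    (hirr : ∀ L, IsIrredSubspace n 𝓗 L → ∑ H ∈ localization n 𝓗 L, a H < (codim n L : ℝ))
    {L : Submodule ℂ (Fin (n + 1) → ℂ)} (hL : IsIntersection n 𝓗 L) (hbot : L ≠ ⊥)
    (htop : L ≠ ⊤) : ∑ H ∈ localization n 𝓗 L, a H < (codim n L : ℝ) := by
  induction hc : codim n L using Nat.strong_induction_on generalizing L with
  | _ c ih =>
    subst hc
    by_cases hs : HasSplitting n (localization n 𝓗 L)
    · obtain ⟨T₁, T₂, hT₁, hT₂, htop₁, htop₂, rfl, hsup, hcover⟩ :=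
        exists_transversal_of_hasSplitting hH hL hs
      have hcodim := codim_inf_of_sup_eq_top (n := n) hsup
      have hpos₁ := codim_pos htop₁
      have hpos₂ := codim_pos htop₂
      have ih₁ := ih _ (by omega) hT₁ (ne_bot_of_le_ne_bot hbot inf_le_left) htop₁ rfl
      have ih₂ := ih _ (by omega) hT₂ (ne_bot_of_le_ne_bot hbot inf_le_right) htop₂ rfl
      calc ∑ H ∈ localization n 𝓗 (T₁ ⊓ T₂), a H
          ≤ ∑ H ∈ localization n 𝓗 T₁, a H + ∑ H ∈ localization n 𝓗 T₂, a H :=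
            sum_le_sum_add_sum_of_subset_union hcover fun H hH' ↦ ha H
              (Finset.union_subset (localization_subset _) (localization_subset _) hH')
        _ < codim n T₁ + codim n T₂ := add_lt_add ih₁ ih₂
        _ = codim n (T₁ ⊓ T₂) := by rw [hcodim, Nat.cast_add]
    · exact hirr L ⟨hL, hbot, htop, hs⟩

theorem sum_localization_lt_codim (hH : ∀ H ∈ 𝓗, H ≠ ⊤) (ha : ∀ H ∈ 𝓗, 0 ≤ a H)
    (hirr : ∀ L, IsIrredSubspace n 𝓗 L → ∑ H ∈ localization n 𝓗 L, a H < (codim n L : ℝ))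
    {L : Submodule ℂ (Fin (n + 1) → ℂ)} (hbot : L ≠ ⊥) (htop : L ≠ ⊤) :
    ∑ H ∈ localization n 𝓗 L, a H < (codim n L : ℝ) := by
  rcases (localization n 𝓗 L).eq_empty_or_nonempty with hempty | hne
  · rw [hempty, Finset.sum_empty]
    exact_mod_cast codim_pos htop
  · have hle := le_inf_localization (𝓗 := 𝓗) L
    have hclosure := sum_localization_lt_codim_of_isIntersection hH ha hirr
      (isIntersection_inf (localization_subset L)) (ne_bot_of_le_ne_bot hbot hle)
      (inf_ne_top_of_nonempty hH (localization_subset L) hne)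
    rw [localization_inf_localization] at hclosure
    exact hclosure.trans_le (by exact_mod_cast codim_anti hle)

end Arrangement

/-- If the klt inequality `∑_{H ⊇ L} a_H < codim L` holds for every irreducible nonempty proper
intersection subspace, then it holds for every nonempty proper intersection subspace, and in
fact for every nonempty proper linear subspace `L`. -/
theorem stmt_3 (n : ℕ) (𝓗 : Finset (Submodule ℂ (Fin (n + 1) → ℂ)))
    (hhyp : ∀ H ∈ 𝓗, Module.finrank ℂ H = n)
    (a : Submodule ℂ (Fin (n + 1) → ℂ) → ℝ) (ha : ∀ H ∈ 𝓗, 0 < a H)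
    (hirr : ∀ L, IsIrredSubspace n 𝓗 L →
      ∑ H ∈ localization n 𝓗 L, a H < (codim n L : ℝ)) :
    (∀ L, IsIntersection n 𝓗 L → L ≠ ⊥ → L ≠ ⊤ →
      ∑ H ∈ localization n 𝓗 L, a H < (codim n L : ℝ)) ∧
    (∀ L : Submodule ℂ (Fin (n + 1) → ℂ), L ≠ ⊥ → L ≠ ⊤ →
      ∑ H ∈ localization n 𝓗 L, a H < (codim n L : ℝ)) := by
  have hH : ∀ H ∈ 𝓗, H ≠ ⊤ := fun H hH ↦ ne_top_of_finrank_eq (hhyp H hH)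
  have ha' : ∀ H ∈ 𝓗, 0 ≤ a H := fun H hH ↦ (ha H hH).le
  exact ⟨fun _ hL ↦ sum_localization_lt_codim_of_isIntersection hH ha' hirr hL,
    fun _ ↦ sum_localization_lt_codim hH ha' hirr⟩
end

section
/- Let (H, a) be a weighted hyperplane arrangement in ℂP^n that is klt and CY. Then H is irreducible: there is no decomposition of H into two nonempty subsets H_1, H_2 together with subspaces L_1, L_2 with L_1 + L_2 = ℂP^n such that every hyperplane of H_1 contains L_1 and every hyperplane of H_2 contains L_2. -/
open scoped Classical

open Finset Module

/-!
Every hyperplane contains `L₁` or `L₂`, so the total weight `n + 1` is at most the sum of the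
weights localized at `L₁` and at `L₂`, which by klt is less than `codim L₁ + codim L₂`. But
`L₁ + L₂ = ℂ^{n+1}` forces `codim L₁ + codim L₂ ≤ n + 1`.
-/

theorem Finset.sum_le_sum_filter_add_sum_filter {ι M : Type*} [AddCommMonoid M] [PartialOrder M]
    [IsOrderedAddMonoid M] {s : Finset ι} {f : ι → M} (p q : ι → Prop) [DecidablePred p]
    [DecidablePred q] (hf : ∀ i ∈ s, 0 ≤ f i) (hpq : ∀ i ∈ s, p i ∨ q i) :
    ∑ i ∈ s, f i ≤ ∑ i ∈ s with p i, f i + ∑ i ∈ s with q i, f i := by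
  calc ∑ i ∈ s, f i = ∑ i ∈ s.filter p ∪ s.filter q, f i := by
        rw [← filter_or, filter_true_of_mem hpq]
    _ ≤ ∑ i ∈ s with p i, f i + ∑ i ∈ s with q i, f i := by
        rw [← sum_union_inter]
        exact le_add_of_nonneg_right
          (sum_nonneg fun i hi => hf i (mem_filter.1 (mem_inter.1 hi).1).1)

theorem codim_add_codim_le_of_sup_eq_top {n : ℕ} {L₁ L₂ : Submodule ℂ (Fin (n + 1) → ℂ)}
    (h : L₁ ⊔ L₂ = ⊤) : codim n L₁ + codim n L₂ ≤ n + 1 := by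
  have hdim := Submodule.finrank_add_le_finrank_add_finrank L₁ L₂
  rw [h, finrank_top, finrank_fin_fun] at hdim
  unfold codim
  omega

/-- A weighted hyperplane arrangement in `ℂP^n` that is klt and Calabi–Yau is irreducible:
there is no decomposition `𝓗 = 𝓗₁ ∪ 𝓗₂` into two nonempty subsets together with subspaces
`L₁, L₂` with `L₁ + L₂ = ℂP^n` such that every hyperplane of `𝓗₁` contains `L₁` and every
hyperplane of `𝓗₂` contains `L₂`. -/
theorem stmt_5 (n : ℕ) (𝓗 : Finset (Submodule ℂ (Fin (n + 1) → ℂ)))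
    (hhyp : ∀ H ∈ 𝓗, Module.finrank ℂ H = n)
    (a : Submodule ℂ (Fin (n + 1) → ℂ) → ℝ) (ha : ∀ H ∈ 𝓗, 0 < a H)
    (hklt : ∀ L : Submodule ℂ (Fin (n + 1) → ℂ), L ≠ ⊥ → L ≠ ⊤ →
      ∑ H ∈ localization n 𝓗 L, a H < (codim n L : ℝ))
    (hcy : ∑ H ∈ 𝓗, a H = n + 1) :
    ¬∃ (𝓗₁ 𝓗₂ : Finset (Submodule ℂ (Fin (n + 1) → ℂ)))
        (L₁ L₂ : Submodule ℂ (Fin (n + 1) → ℂ)),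
        𝓗₁.Nonempty ∧ 𝓗₂.Nonempty ∧ 𝓗 = 𝓗₁ ∪ 𝓗₂ ∧ L₁ ⊔ L₂ = ⊤ ∧
        (∀ H ∈ 𝓗₁, L₁ ≤ H) ∧ (∀ H ∈ 𝓗₂, L₂ ≤ H) := by
  rintro ⟨𝓗₁, 𝓗₂, L₁, L₂, ⟨H₁, hH₁⟩, ⟨H₂, hH₂⟩, rfl, hsup, hL₁H, hL₂H⟩
  have hproper : ∀ H ∈ 𝓗₁ ∪ 𝓗₂, H ≠ ⊤ := fun H hH =>
    (Submodule.lt_top_of_finrank_lt_finrank (by simp [hhyp H hH])).ne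
  have hL₁top : L₁ ≠ ⊤ := ne_top_of_le_ne_top (hproper H₁ (mem_union_left _ hH₁)) (hL₁H H₁ hH₁)
  have hL₂top : L₂ ≠ ⊤ := ne_top_of_le_ne_top (hproper H₂ (mem_union_right _ hH₂)) (hL₂H H₂ hH₂)
  have hL₁bot : L₁ ≠ ⊥ := fun h => hL₂top (by simpa [h] using hsup)
  have hL₂bot : L₂ ≠ ⊥ := fun h => hL₁top (by simpa [h] using hsup)
  have hcover : ∀ H ∈ 𝓗₁ ∪ 𝓗₂, L₁ ≤ H ∨ L₂ ≤ H := fun H hH =>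
    (mem_union.1 hH).imp (hL₁H H) (hL₂H H)
  have hlt : (n + 1 : ℝ) < n + 1 := calc
    (n + 1 : ℝ) = ∑ H ∈ 𝓗₁ ∪ 𝓗₂, a H := hcy.symm
    _ ≤ ∑ H ∈ localization n (𝓗₁ ∪ 𝓗₂) L₁, a H + ∑ H ∈ localization n (𝓗₁ ∪ 𝓗₂) L₂, a H :=
      sum_le_sum_filter_add_sum_filter _ _ (fun H hH => (ha H hH).le) hcover
    _ < codim n L₁ + codim n L₂ := add_lt_add (hklt L₁ hL₁bot hL₁top) (hklt L₂ hL₂bot hL₂top)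
    _ ≤ n + 1 := by exact_mod_cast codim_add_codim_le_of_sup_eq_top hsup
  exact lt_irrefl _ hlt
end

section
/- Let H be a nonempty finite arrangement of hyperplanes in ℂP^n. Suppose that for every nonempty proper intersection subspace L one has m_L < (codim L) · |H| / (n+1), where m_L is the number of hyperplanes containing L. Then H is essential and irreducible. -/
open scoped Classical

/-- A nonempty arrangement in `ℂP^n` satisfying `m_L < codim L · |𝓗| / (n+1)` for every
nonempty proper intersection subspace `L` is essential and irreducible. -/
theorem stmt_6 (n : ℕ) (𝓗 : Finset (Submodule ℂ (Fin (n + 1) → ℂ))) (hne : 𝓗.Nonempty)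
    (hhyp : ∀ H ∈ 𝓗, Module.finrank ℂ H = n)
    (hmul : ∀ L, IsIntersection n 𝓗 L → L ≠ ⊥ → L ≠ ⊤ →
      ((localization n 𝓗 L).card : ℝ) < (codim n L : ℝ) * 𝓗.card / (n + 1)) :
    𝓗.inf id = ⊥ ∧ ¬HasSplitting n 𝓗 := by
  classical
  have hfin : Module.finrank ℂ (Fin (n + 1) → ℂ) = n + 1 := by
    simp [Module.finrank_fin_fun]
  have hnot_top : ∀ H ∈ 𝓗, H ≠ ⊤ := by
    intro H hH heq
    have h1 := hhyp H hH
    rw [heq, finrank_top, hfin] at h1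
    omega
  -- any nonempty subfamily's inf is not ⊤
  have hinf_ne_top : ∀ S : Finset (Submodule ℂ (Fin (n + 1) → ℂ)), S ⊆ 𝓗 → S.Nonempty →
      S.inf id ≠ ⊤ := by
    intro S hS ⟨H0, hH0⟩ h
    have hle : S.inf id ≤ H0 := Finset.inf_le hH0
    rw [h] at hle
    exact hnot_top H0 (hS hH0) (top_le_iff.mp hle)
  have hnp1 : (0 : ℝ) < (n : ℝ) + 1 := by positivity
  have hess : 𝓗.inf id = ⊥ := by
    by_contra hbot
    have hint : IsIntersection n 𝓗 (𝓗.inf id) := ⟨𝓗, le_refl _, rfl⟩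
    have hLtop : 𝓗.inf id ≠ ⊤ := hinf_ne_top 𝓗 (le_refl _) hne
    have h1 := hmul _ hint hbot hLtop
    have hloc : localization n 𝓗 (𝓗.inf id) = 𝓗 := by
      apply Finset.filter_true_of_mem
      intro H hH; exact Finset.inf_le hH
    rw [hloc] at h1
    have hc : (codim n (𝓗.inf id) : ℝ) ≤ (n : ℝ) + 1 := by
      have : codim n (𝓗.inf id) ≤ n + 1 := Nat.sub_le _ _
      exact_mod_cast this
    have hcard : (0 : ℝ) ≤ (𝓗.card : ℝ) := by positivity
    rw [lt_div_iff₀ hnp1] at h1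
    nlinarith
  refine ⟨hess, ?_⟩
  rintro ⟨𝓗₁, 𝓗₂, h1ne, h2ne, hunion, hsup⟩
  have hs1 : 𝓗₁ ⊆ 𝓗 := hunion ▸ Finset.subset_union_left
  have hs2 : 𝓗₂ ⊆ 𝓗 := hunion ▸ Finset.subset_union_right
  set T₁ := 𝓗₁.inf id with hT1
  set T₂ := 𝓗₂.inf id with hT2
  have hT1top : T₁ ≠ ⊤ := hinf_ne_top 𝓗₁ hs1 h1ne
  have hT2top : T₂ ≠ ⊤ := hinf_ne_top 𝓗₂ hs2 h2ne
  have hT1bot : T₁ ≠ ⊥ := by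
    intro h; rw [h, bot_sup_eq] at hsup; exact hT2top hsup
  have hT2bot : T₂ ≠ ⊥ := by
    intro h; rw [h, sup_bot_eq] at hsup; exact hT1top hsup
  have hinf : T₁ ⊓ T₂ = ⊥ := by
    rw [hT1, hT2, ← Finset.inf_union, ← hunion, hess]
  have hrk : Module.finrank ℂ T₁ + Module.finrank ℂ T₂ = n + 1 := by
    have := Submodule.finrank_sup_add_finrank_inf_eq T₁ T₂
    rw [hsup, hinf, finrank_top, hfin, finrank_bot] at this
    omega
  have hle1 : Module.finrank ℂ T₁ ≤ n + 1 := by have := Submodule.finrank_le T₁; omega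
  have hle2 : Module.finrank ℂ T₂ ≤ n + 1 := by have := Submodule.finrank_le T₂; omega
  have hcod : codim n T₁ + codim n T₂ = n + 1 := by
    unfold codim; omega
  have hq1 := hmul T₁ ⟨𝓗₁, hs1, rfl⟩ hT1bot hT1top
  have hq2 := hmul T₂ ⟨𝓗₂, hs2, rfl⟩ hT2bot hT2top
  have hc1 : 𝓗₁.card ≤ (localization n 𝓗 T₁).card := by
    apply Finset.card_le_card
    intro H hH
    exact Finset.mem_filter.mpr ⟨hs1 hH, Finset.inf_le hH⟩
  have hc2 : 𝓗₂.card ≤ (localization n 𝓗 T₂).card := by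
    apply Finset.card_le_card
    intro H hH
    exact Finset.mem_filter.mpr ⟨hs2 hH, Finset.inf_le hH⟩
  have hcu : 𝓗.card ≤ 𝓗₁.card + 𝓗₂.card := hunion ▸ Finset.card_union_le _ _
  have hcodR : (codim n T₁ : ℝ) + (codim n T₂ : ℝ) = (n : ℝ) + 1 := by
    exact_mod_cast hcod
  have hc1R : (𝓗₁.card : ℝ) ≤ ((localization n 𝓗 T₁).card : ℝ) := by exact_mod_cast hc1
  have hc2R : (𝓗₂.card : ℝ) ≤ ((localization n 𝓗 T₂).card : ℝ) := by exact_mod_cast hc2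
  have hcuR : (𝓗.card : ℝ) ≤ (𝓗₁.card : ℝ) + (𝓗₂.card : ℝ) := by exact_mod_cast hcu
  rw [lt_div_iff₀ hnp1] at hq1 hq2
  nlinarith
end

section
/- Let H be an essential irreducible arrangement in ℂP^n, let Y be a holomorphic vector field on ℂP^n (equivalently, induced by a linear endomorphism f of ℂ^{n+1} modulo scalars) tangent to every hyperplane H ∈ 𝓗, i.e., f(H^c) ⊆ H^c for all H. Then Y = 0, i.e., f is a scalar multiple of the identity. -/
open scoped Classical

section aux

variable {n : ℕ}

private lemma quot_scalar (H : Submodule ℂ (Fin (n + 1) → ℂ))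
    (hH : Module.finrank ℂ H = n)
    (f : (Fin (n + 1) → ℂ) →ₗ[ℂ] (Fin (n + 1) → ℂ))
    (hf : ∀ x ∈ H, f x ∈ H) :
    ∃ c : ℂ, ∀ x, f x - c • x ∈ H := by
  have hq : Module.finrank ℂ ((Fin (n + 1) → ℂ) ⧸ H) = 1 := by
    have h1 := Submodule.finrank_quotient_add_finrank H
    have h2 : Module.finrank ℂ (Fin (n + 1) → ℂ) = n + 1 := Module.finrank_fin_fun ℂ
    omega
  obtain ⟨v, hv0, hv⟩ := finrank_eq_one_iff'.mp hq
  let g := H.mapQ H f hf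
  obtain ⟨c, hc⟩ := hv (g v)
  refine ⟨c, fun x => ?_⟩
  obtain ⟨a, ha⟩ := hv (H.mkQ x)
  have hgx : H.mkQ (f x) = c • H.mkQ x := by
    have h1 : g (H.mkQ x) = H.mkQ (f x) := by
      simp [g, Submodule.mkQ_apply, Submodule.mapQ_apply]
    rw [← h1, ← ha, map_smul, ← hc, smul_comm]
  have h0 : H.mkQ (f x - c • x) = 0 := by
    rw [map_sub, map_smul, hgx, sub_self]
  rw [Submodule.mkQ_apply, Submodule.Quotient.mk_eq_zero] at h0
  exact h0

private lemma gen_eig_le (H : Submodule ℂ (Fin (n + 1) → ℂ))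
    (f : (Fin (n + 1) → ℂ) →ₗ[ℂ] (Fin (n + 1) → ℂ))
    (c : ℂ) (hc : ∀ x, f x - c • x ∈ H) (μ : ℂ) (hμ : μ ≠ c) :
    (Module.End.maxGenEigenspace f μ : Submodule ℂ (Fin (n + 1) → ℂ)) ≤ H := by
  have hmk : ∀ k : ℕ, ∀ y, H.mkQ (((f - μ • (1 : Module.End ℂ (Fin (n + 1) → ℂ))) ^ k) y)
      = (c - μ) ^ k • H.mkQ y := by
    intro k
    induction k with
    | zero => intro y; simp
    | succ k ih =>
      intro y
      have step : H.mkQ ((f - μ • (1 : Module.End ℂ (Fin (n + 1) → ℂ))) y)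
          = (c - μ) • H.mkQ y := by
        have h1 : (f - μ • (1 : Module.End ℂ (Fin (n + 1) → ℂ))) y = f y - μ • y := rfl
        have h2 : H.mkQ (f y) = c • H.mkQ y := by
          have h0 : H.mkQ (f y - c • y) = 0 := by
            rw [Submodule.mkQ_apply, Submodule.Quotient.mk_eq_zero]; exact hc y
          rw [map_sub, map_smul, sub_eq_zero] at h0
          exact h0
        rw [h1, map_sub, map_smul, h2, sub_smul]
      have h3 : ((f - μ • (1 : Module.End ℂ (Fin (n + 1) → ℂ))) ^ (k + 1)) y
          = ((f - μ • (1 : Module.End ℂ (Fin (n + 1) → ℂ))) ^ k)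
            ((f - μ • (1 : Module.End ℂ (Fin (n + 1) → ℂ))) y) := by
        rw [pow_succ, Module.End.mul_apply]
      rw [h3, ih, step, smul_smul, pow_succ, mul_comm]
  intro x hx
  obtain ⟨k, hk⟩ := (Module.End.mem_maxGenEigenspace f μ x).mp hx
  have h4 := hmk k x
  rw [hk, map_zero] at h4
  have hcm : (c - μ) ^ k ≠ 0 := pow_ne_zero _ (sub_ne_zero.mpr (Ne.symm hμ))
  have hx0 : H.mkQ x = 0 := (smul_eq_zero.mp h4.symm).resolve_left hcm
  rw [Submodule.mkQ_apply, Submodule.Quotient.mk_eq_zero] at hx0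
  exact hx0

end aux

/-- If `𝓗` is an essential irreducible arrangement of hyperplanes and `f` is a linear
endomorphism of `ℂ^{n+1}` preserving every hyperplane of the arrangement (i.e. the induced
holomorphic vector field on `ℂP^n` is tangent to every member of `𝓗`), then `f` is a scalar
multiple of the identity (i.e. the induced vector field vanishes). -/
theorem stmt_7 (n : ℕ) (𝓗 : Finset (Submodule ℂ (Fin (n + 1) → ℂ)))
    (hhyp : ∀ H ∈ 𝓗, Module.finrank ℂ H = n)
    (hess : 𝓗.inf id = ⊥) (hirr : ¬HasSplitting n 𝓗)
    (f : (Fin (n + 1) → ℂ) →ₗ[ℂ] (Fin (n + 1) → ℂ))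
    (hf : ∀ H ∈ 𝓗, ∀ x ∈ H, f x ∈ H) :
    ∃ c : ℂ, f = c • LinearMap.id := by
  have key : ∀ H ∈ 𝓗, ∃ c : ℂ, ∀ x, f x - c • x ∈ H :=
    fun H hH => quot_scalar H (hhyp H hH) f (hf H hH)
  choose! lam hlam using key
  have hne : 𝓗.Nonempty := by
    rcases 𝓗.eq_empty_or_nonempty with h | h
    · exfalso
      rw [h, Finset.inf_empty] at hess
      have h1 : (fun _ : Fin (n + 1) => (1 : ℂ)) ∈ (⊤ : Submodule ℂ (Fin (n + 1) → ℂ)) :=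
        trivial
      rw [hess, Submodule.mem_bot] at h1
      simpa using congrFun h1 0
    · exact h
  obtain ⟨H₀, hH₀⟩ := hne
  set c := lam H₀ with hcdef
  by_cases hall : ∀ H ∈ 𝓗, lam H = c
  · refine ⟨c, LinearMap.ext fun x => ?_⟩
    have hx : f x - c • x ∈ 𝓗.inf id := by
      rw [Submodule.mem_finsetInf]
      intro H hH
      have := hlam H hH x
      rwa [hall H hH] at this
    rw [hess, Submodule.mem_bot, sub_eq_zero] at hx
    simpa using hx
  · exfalso
    push_neg at hall
    obtain ⟨H', hH', hlamH'⟩ := hall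
    apply hirr
    unfold HasSplitting
    refine ⟨𝓗.filter (fun H => lam H = c), 𝓗.filter (fun H => lam H ≠ c),
      ⟨H₀, by simp [hH₀, hcdef]⟩, ⟨H', by simp [hH', hlamH']⟩,
      (Finset.filter_union_filter_not_eq _ 𝓗).symm, ?_⟩
    rw [eq_top_iff, ← Module.End.iSup_maxGenEigenspace_eq_top (f : Module.End ℂ (Fin (n + 1) → ℂ))]
    apply iSup_le
    intro μ
    by_cases hμ : μ = c
    · refine le_sup_of_le_right ?_
      rw [Finset.le_inf_iff]
      intro H hH
      rw [Finset.mem_filter] at hH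
      subst hμ
      exact gen_eig_le H f (lam H) (hlam H hH.1) _ (fun h => hH.2 h.symm)
    · refine le_sup_of_le_left ?_
      rw [Finset.le_inf_iff]
      intro H hH
      rw [Finset.mem_filter] at hH
      exact gen_eig_le H f (lam H) (hlam H hH.1) μ (by rw [hH.2]; exact hμ)
end

section
/- Every *-nested set in a finite-dimensional vector space V* admits an adapted basis: if 𝓝 is a finite set of nonzero subspaces of V* such that every collection of pairwise non-comparable (under inclusion) members N_1,...,N_k satisfies that their sum is direct and that this sum is not itself a member of 𝓝, then there is a basis B of V* such that for every N ∈ 𝓝, the set B ∩ N spans N. -/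
/-!
Induct on the dimension of a subspace `W` containing every member of `𝓝`. The maximal members
of `𝓝` strictly below `W` form an antichain, so their sum is direct, and each has smaller
dimension, so by induction carries an independent spanning set adapted to the members of `𝓝`
below it. Directness makes the union of these sets independent; extend it to a basis of `W`.
Every member of `𝓝` other than `W` lies below some maximal one, so the basis is adapted.
-/

open Module Submodule

section

variable {K V : Type*} [DivisionRing K] [AddCommGroup V] [Module K V]

theorem iSupIndep.linearIndepOn_iUnion {ι : Type*} {f : ι → Submodule K V} (hf : iSupIndep f)
    {C : ι → Set V} (hC : ∀ i, LinearIndepOn K id (C i)) (hCf : ∀ i, C i ⊆ f i) :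
    LinearIndepOn K id (⋃ i, C i) :=
  linearIndepOn_id_iUnion_finite hC fun i _ _ hit =>
    (hf.disjoint_biSup hit).mono (span_le.mpr (hCf i)) (iSup₂_mono fun j _ => span_le.mpr (hCf j))

namespace Submodule

theorem finrank_finsetSup_eq_sum_of_card_le_one {s : Finset (Submodule K V)} (hs : s.card ≤ 1) :
    finrank K ↥(s.sup id) = ∑ N ∈ s, finrank K N := by
  obtain ⟨N, hN⟩ := Finset.card_le_one_iff_subset_singleton.mp hs
  obtain rfl | rfl := Finset.subset_singleton_iff.mp hN
  · rw [Finset.sup_empty, Finset.sum_empty, finrank_bot]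
  · rw [Finset.sup_singleton, Finset.sum_singleton, id]

theorem supIndep_of_finrank_sup_eq_sum [FiniteDimensional K V] {A : Finset (Submodule K V)}
    (hA : ∀ t ⊆ A, finrank K ↥(t.sup id) = ∑ N ∈ t, finrank K N) : A.SupIndep id := by
  classical
  intro t ht M hM hMt
  have h_insert := hA (insert M t) (Finset.insert_subset hM ht)
  rw [Finset.sup_insert, Finset.sum_insert hMt, ← hA t ht, id] at h_insert
  have h_inf := finrank_sup_add_finrank_inf_eq M (t.sup id)
  rw [disjoint_iff, id, ← finrank_eq_zero]
  omega

/-- Condition (i) of a *-nested set, with directness of a sum expressed by `Finset.SupIndep`. -/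
def AntichainsSupIndep (𝓝 : Finset (Submodule K V)) : Prop :=
  ∀ s ⊆ 𝓝, IsAntichain (· ≤ ·) (s : Set (Submodule K V)) → s.SupIndep id

theorem AntichainsSupIndep.mono {𝓝 𝓜 : Finset (Submodule K V)} (h𝓝 : AntichainsSupIndep 𝓝)
    (h : 𝓜 ⊆ 𝓝) : AntichainsSupIndep 𝓜 :=
  fun s hs => h𝓝 s (hs.trans h)

theorem exists_adapted_linearIndepOn [FiniteDimensional K V] (W : Submodule K V)
    (𝓝 : Finset (Submodule K V)) (hW : ∀ N ∈ 𝓝, N ≤ W) (h𝓝 : AntichainsSupIndep 𝓝) :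
    ∃ C ⊆ (W : Set V), LinearIndepOn K id C ∧ span K C = W ∧
      ∀ N ∈ 𝓝, span K (C ∩ N) = N := by
  classical
  induction hn : finrank K W using Nat.strong_induction_on generalizing W 𝓝 with
  | _ n ih =>
    set below := 𝓝.filter (· < W)
    set A := below.filter (Maximal (· ∈ below))
    have hA_lt : ∀ M ∈ A, M < W := fun M hM => (Finset.mem_filter.mp (Finset.mem_filter.mp hM).1).2
    have hC : ∀ M ∈ A, ∃ C ⊆ (M : Set V), LinearIndepOn K id C ∧
        ∀ N ∈ 𝓝, N ≤ M → span K (C ∩ N) = N := by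
      intro M hM
      obtain ⟨C, hCM, hC, -, hCN⟩ := ih _ (hn ▸ finrank_lt_finrank_of_lt (hA_lt M hM)) M
        (𝓝.filter (· ≤ M)) (by simp) (h𝓝.mono (Finset.filter_subset _ _)) rfl
      exact ⟨C, hCM, hC, fun N hN hNM => hCN N (Finset.mem_filter.mpr ⟨hN, hNM⟩)⟩
    choose! C hCM hC hCN using hC
    have hA : A.SupIndep id := h𝓝 A ((Finset.filter_subset _ _).trans (Finset.filter_subset _ _))
      ((setOfPred_maximal_antichain (· ∈ below)).subset fun M hM => (Finset.mem_filter.mp hM).2)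
    have hD : LinearIndepOn K id (⋃ M : A, C M) :=
      hA.independent.linearIndepOn_iUnion (fun M => hC M M.2) (fun M => hCM M M.2)
    obtain ⟨B, hBW, hDB, hWB, hB⟩ := exists_linearIndepOn_id_extension hD
      (Set.iUnion_subset fun M => (hCM M M.2).trans (hA_lt M M.2).le)
    have hspan : span K B = W := le_antisymm (span_le.mpr hBW) hWB
    refine ⟨B, hBW, hB, hspan, fun N hN => le_antisymm (span_le.mpr Set.inter_subset_right) ?_⟩
    obtain hNW | rfl := (hW N hN).lt_or_eq
    · obtain ⟨M, hNM, hM⟩ := below.exists_le_maximal (Finset.mem_filter.mpr ⟨hN, hNW⟩)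
      have hMA : M ∈ A := Finset.mem_filter.mpr ⟨hM.prop, hM⟩
      calc N = span K (C M ∩ N) := (hCN M hMA N hN hNM).symm
        _ ≤ span K (B ∩ N) := span_mono <| Set.inter_subset_inter_left _ <|
            (Set.subset_iUnion (fun M : A => C M) ⟨M, hMA⟩).trans hDB
    · rw [Set.inter_eq_left.mpr hBW, hspan]

end Submodule

end

theorem stmt_10_general {K V : Type*} [Field K] [AddCommGroup V] [Module K V] [FiniteDimensional K V]
    (𝓝 : Finset (Submodule K V))
    (hnested : ∀ s : Finset (Submodule K V), s ⊆ 𝓝 → 2 ≤ s.card →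
      (∀ N₁ ∈ s, ∀ N₂ ∈ s, N₁ ≠ N₂ → ¬N₁ ≤ N₂) →
      Module.finrank K ↥(s.sup id) = (∑ N ∈ s, Module.finrank K ↥N) ∧ s.sup id ∉ 𝓝) :
    ∃ B : Set V, LinearIndependent K ((↑) : B → V) ∧ Submodule.span K B = ⊤ ∧
      ∀ N ∈ 𝓝, Submodule.span K (B ∩ (N : Set V)) = N := by
  have h𝓝 : AntichainsSupIndep 𝓝 := fun s hs hanti =>
    supIndep_of_finrank_sup_eq_sum fun t ht => by
      rcases le_or_gt 2 t.card with h2 | h1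
      · exact (hnested t (ht.trans hs) h2 (hanti.subset (Finset.coe_subset.mpr ht))).1
      · exact finrank_finsetSup_eq_sum_of_card_le_one (by omega)
  obtain ⟨B, -, hB, hspan, hadapted⟩ := exists_adapted_linearIndepOn ⊤ 𝓝 (fun _ _ => le_top) h𝓝
  exact ⟨B, hB, hspan, hadapted⟩

/-- Every *-nested set in a finite-dimensional vector space admits an adapted basis: if `𝓝` is
a finite set of nonzero subspaces such that every collection of at least two pairwise
non-comparable members has a direct sum (the dimension of the sum is the sum of dimensions)
which is not itself a member of `𝓝`, then there is a basis `B` of the space such that for every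
`N ∈ 𝓝` the set `B ∩ N` spans `N`. -/
theorem stmt_10 {K V : Type*} [Field K] [AddCommGroup V] [Module K V] [FiniteDimensional K V]
    (𝓝 : Finset (Submodule K V)) (h0 : ∀ N ∈ 𝓝, N ≠ ⊥)
    (hnested : ∀ s : Finset (Submodule K V), s ⊆ 𝓝 → 2 ≤ s.card →
      (∀ N₁ ∈ s, ∀ N₂ ∈ s, N₁ ≠ N₂ → ¬N₁ ≤ N₂) →
      Module.finrank K ↥(s.sup id) = (∑ N ∈ s, Module.finrank K ↥N) ∧ s.sup id ∉ 𝓝) :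
    ∃ B : Set V, LinearIndependent K ((↑) : B → V) ∧ Submodule.span K B = ⊤ ∧
      ∀ N ∈ 𝓝, Submodule.span K (B ∩ (N : Set V)) = N :=
  stmt_10_general 𝓝 hnested
end

section
/- Let P be a configuration of m points p_1, ..., p_m in ℂP^n that is essential (the points span ℂP^n) and irreducible (P is not contained in the union of two disjoint proper linear subspaces each meeting P). Then there exists a weight vector a ∈ ℝ^m with all a_i > 0 such that for every nonempty proper linear subspace W ⊂ ℂP^n: ∑_{i : p_i ∈ W} a_i < ((dim W + 1)/(n+1)) · ∑_{i=1}^m a_i. -/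
/-!
Weight each point by the number of bases (independent `(n+1)`-subsets of the configuration)
containing it. Double counting turns `∑_{pᵢ ∈ W} aᵢ` into `∑_B |B ∩ W|` and `∑ aᵢ` into
`(n+1) · #bases`, so stability amounts to `∑_B |B ∩ W| < dim W · #bases`. Every basis has
`|B ∩ W| ≤ dim W`, and irreducibility provides one with strict inequality: extend a maximal
independent set of the points outside `W`, spanning `V`, to a basis `B`. Since `W ⊔ V` is
everything but `W ⊓ V ≠ 0`, we get `|B ∩ W| ≤ (n+1) - dim V < dim W`.
-/

open scoped Classical

open Finset Module Submodule

namespace PointConfiguration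

variable (K : Type*) {E ι : Type*} [Field K] [AddCommGroup E] [Module K E] (p : ι → E)

def IsReducible : Prop :=
  ∃ U V : Submodule K E, U ⊓ V = ⊥ ∧
    (∀ i, p i ∈ U ∨ p i ∈ V) ∧ (∃ i, p i ∈ U) ∧ (∃ i, p i ∈ V)

variable {K p}

theorem _root_.LinearIndepOn.finrank_span_image_eq_card {B : Finset ι}
    (hB : LinearIndepOn K p (B : Set ι)) : finrank K (span K (p '' B)) = #B := by
  rw [Set.image_eq_range, finrank_span_eq_card hB]
  simp

theorem card_filter_mem_le_finrank [FiniteDimensional K E] {B : Finset ι}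
    (hB : LinearIndepOn K p (B : Set ι)) (W : Submodule K E) :
    #{i ∈ B | p i ∈ W} ≤ finrank K W := by
  have hF : LinearIndepOn K p (({i ∈ B | p i ∈ W} : Finset ι) : Set ι) :=
    hB.mono (coe_subset.mpr (filter_subset _ _))
  rw [← hF.finrank_span_image_eq_card]
  refine Submodule.finrank_mono (span_le.mpr ?_)
  rintro _ ⟨i, hi, rfl⟩
  exact (mem_filter.mp hi).2

theorem eq_top_of_forall_mem (hspan : span K (Set.range p) = ⊤) {U : Submodule K E}
    (hU : ∀ i, p i ∈ U) : U = ⊤ := by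
  rw [eq_top_iff, ← hspan, span_le]
  rintro _ ⟨i, rfl⟩
  exact hU i

theorem mem_or_mem_span_image_not_mem (W : Submodule K E) (i : ι) :
    p i ∈ W ∨ p i ∈ span K (p '' {j | p j ∉ W}) :=
  (em (p i ∈ W)).imp_right fun h => subset_span ⟨i, h, rfl⟩

theorem sup_span_image_not_mem_eq_top (hspan : span K (Set.range p) = ⊤) (W : Submodule K E) :
    W ⊔ span K (p '' {i | p i ∉ W}) = ⊤ :=
  eq_top_of_forall_mem hspan fun i =>
    (mem_or_mem_span_image_not_mem W i).elim (fun h => mem_sup_left h) (fun h => mem_sup_right h)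

theorem inf_span_image_not_mem_ne_bot (hirr : ¬IsReducible K p)
    (hspan : span K (Set.range p) = ⊤) {W : Submodule K E} (hW₀ : W ≠ ⊥) (hW : W ≠ ⊤) :
    W ⊓ span K (p '' {i | p i ∉ W}) ≠ ⊥ := by
  have hcover := mem_or_mem_span_image_not_mem (p := p) W
  intro hbot
  by_cases hWp : ∃ i, p i ∈ W
  · have hVp : ∃ i, p i ∈ span K (p '' {j | p j ∉ W}) := by
      by_contra! hVp
      exact hW (eq_top_of_forall_mem hspan fun i => (hcover i).resolve_right (hVp i))
    exact hirr ⟨W, _, hbot, hcover, hWp, hVp⟩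
  · simp only [not_exists] at hWp
    rw [eq_top_of_forall_mem hspan fun i => (hcover i).resolve_left (hWp i), inf_top_eq] at hbot
    exact hW₀ hbot

variable [Fintype ι]

variable (K p) in
/-- Bases are sets of indices, so coincident points `p i = p j` still give distinct bases. -/
noncomputable def indexBases : Finset (Finset ι) :=
  {B | LinearIndepOn K p (B : Set ι) ∧ #B = finrank K E}

theorem exists_mem_indexBases_superset [FiniteDimensional K E]
    (hspan : span K (Set.range p) = ⊤) {s : Set ι} (hs : LinearIndepOn K p s) :
    ∃ B ∈ indexBases K p, s ⊆ B := by
  obtain ⟨b, -, hsb, hpb, hb⟩ := exists_linearIndepOn_extension hs (Set.subset_univ s)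
  have hbspan : span K (p '' b) = ⊤ := by
    rw [eq_top_iff, ← hspan, ← Set.image_univ, span_le]
    exact hpb
  refine ⟨b.toFinset, ?_, by simpa using hsb⟩
  have hb' : LinearIndepOn K p (b.toFinset : Set ι) := by simpa using hb
  refine mem_filter.mpr ⟨mem_univ _, hb', ?_⟩
  rw [← hb'.finrank_span_image_eq_card, Set.coe_toFinset, hbspan, finrank_top]

theorem exists_mem_indexBases_card_filter_lt [FiniteDimensional K E] (hirr : ¬IsReducible K p)
    (hspan : span K (Set.range p) = ⊤) {W : Submodule K E} (hW₀ : W ≠ ⊥) (hW : W ≠ ⊤) :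
    ∃ B ∈ indexBases K p, #{i ∈ B | p i ∈ W} < finrank K W := by
  obtain ⟨s, hsT, -, hTs, hs⟩ :=
    exists_linearIndepOn_extension (linearIndepOn_empty K p) (Set.empty_subset {i | p i ∉ W})
  set S := s.toFinset
  have hS : LinearIndepOn K p (S : Set ι) := by simpa [S] using hs
  obtain ⟨B, hB, hSB⟩ := exists_mem_indexBases_superset hspan hS
  replace hSB : S ⊆ B := coe_subset.mp hSB
  refine ⟨B, hB, ?_⟩
  have hspanS : span K (p '' S) = span K (p '' {i | p i ∉ W}) := by
    rw [Set.coe_toFinset]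
    exact le_antisymm (span_mono (Set.image_mono hsT)) (span_le.mpr hTs)
  have hdim : finrank K E < finrank K W + #S := by
    have hinf := inf_span_image_not_mem_ne_bot hirr hspan hW₀ hW
    rw [← hspanS] at hinf
    have hinf_pos : 0 < finrank K ↥(W ⊓ span K (p '' S)) :=
      Nat.pos_of_ne_zero fun h => hinf (Submodule.finrank_eq_zero.mp h)
    have hsum := Submodule.finrank_sup_add_finrank_inf_eq W (span K (p '' S))
    rw [hspanS, sup_span_image_not_mem_eq_top hspan, finrank_top, ← hspanS,
      hS.finrank_span_image_eq_card] at hsum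
    omega
  have hfilter : {i ∈ B | p i ∈ W} ⊆ B \ S := fun i hi =>
    mem_sdiff.mpr ⟨(mem_filter.mp hi).1,
      fun hiS => hsT (by simpa [S] using hiS) (mem_filter.mp hi).2⟩
  have hBcard : #B = finrank K E := (mem_filter.mp hB).2.2
  have hfilter_card := card_le_card hfilter
  rw [card_sdiff_of_subset hSB] at hfilter_card
  have hSB_card := card_le_card hSB
  omega

variable (K p) in
noncomputable def basisCount (i : ι) : ℕ := #{B ∈ indexBases K p | i ∈ B}

theorem sum_basisCount (S : Finset ι) :
    ∑ i ∈ S, basisCount K p i = ∑ B ∈ indexBases K p, #(S ∩ B) := by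
  simp only [basisCount, card_eq_sum_ones, sum_filter, ← filter_mem_eq_inter]
  exact sum_comm

theorem basisCount_pos [FiniteDimensional K E] (hspan : span K (Set.range p) = ⊤) {i : ι}
    (hi : p i ≠ 0) : 0 < basisCount K p i := by
  obtain ⟨B, hB, hiB⟩ :=
    exists_mem_indexBases_superset hspan ((linearIndepOn_singleton_iff K).mpr hi)
  exact card_pos.mpr ⟨B, mem_filter.mpr ⟨hB, hiB rfl⟩⟩

theorem sum_basisCount_univ : ∑ i, basisCount K p i = #(indexBases K p) * finrank K E := by
  rw [sum_basisCount, ← smul_eq_mul, ← sum_const]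
  refine sum_congr rfl fun B hB => ?_
  rw [univ_inter, (mem_filter.mp hB).2.2]

theorem sum_basisCount_filter_lt [FiniteDimensional K E] (hirr : ¬IsReducible K p)
    (hspan : span K (Set.range p) = ⊤) {W : Submodule K E} (hW₀ : W ≠ ⊥) (hW : W ≠ ⊤) :
    ∑ i ∈ {i | p i ∈ W}, basisCount K p i < finrank K W * #(indexBases K p) := by
  have hinter (B : Finset ι) : ({i | p i ∈ W} : Finset ι) ∩ B = {i ∈ B | p i ∈ W} := by
    rw [filter_inter, univ_inter]
  rw [sum_basisCount, mul_comm, ← smul_eq_mul, ← sum_const]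
  obtain ⟨B₀, hB₀, hlt⟩ := exists_mem_indexBases_card_filter_lt hirr hspan hW₀ hW
  refine sum_lt_sum (fun B hB => ?_) ⟨B₀, hB₀, by rwa [hinter]⟩
  rw [hinter]
  exact card_filter_mem_le_finrank (mem_filter.mp hB).2.1 W

end PointConfiguration

open PointConfiguration in
/-- A configuration of points `p₁, ..., p_m` in `ℂP^n` (given by nonzero vectors of `ℂ^{n+1}`)
that is essential (the points span) and irreducible (not contained in the union of two
disjoint subspaces each meeting the configuration) admits a positive weight vector `a` making
it stable: for every nonempty proper linear subspace `W`,
`∑_{i : pᵢ ∈ W} aᵢ < ((dim W + 1)/(n+1)) ∑ᵢ aᵢ` (with `dim W + 1` the linear dimension). -/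
theorem stmt_19 (n m : ℕ) (p : Fin m → (Fin (n + 1) → ℂ))
    (hp : ∀ i, p i ≠ 0)
    (hess : Submodule.span ℂ (Set.range p) = ⊤)
    (hirr : ¬∃ U V : Submodule ℂ (Fin (n + 1) → ℂ), U ⊓ V = ⊥ ∧
      (∀ i, p i ∈ U ∨ p i ∈ V) ∧ (∃ i, p i ∈ U) ∧ (∃ i, p i ∈ V)) :
    ∃ a : Fin m → ℝ, (∀ i, 0 < a i) ∧
      ∀ W : Submodule ℂ (Fin (n + 1) → ℂ), W ≠ ⊥ → W ≠ ⊤ →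
        ∑ i ∈ Finset.univ.filter (fun i => p i ∈ W), a i
          < ((Module.finrank ℂ W : ℝ) / (n + 1)) * ∑ i, a i := by
  refine ⟨fun i => basisCount ℂ p i, fun i => Nat.cast_pos.mpr (basisCount_pos hess (hp i)),
    fun W hW₀ hW => ?_⟩
  have hlt := sum_basisCount_filter_lt hirr hess hW₀ hW
  have htotal : ∑ i, basisCount ℂ p i = #(indexBases ℂ p) * (n + 1) := by
    rw [sum_basisCount_univ, Module.finrank_fin_fun]
  have hscale : (finrank ℂ W : ℝ) / (n + 1) * ((#(indexBases ℂ p) * (n + 1) : ℕ) : ℝ)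
      = ((finrank ℂ W * #(indexBases ℂ p) : ℕ) : ℝ) := by
    push_cast
    field_simp
  rw [← Nat.cast_sum, ← Nat.cast_sum, htotal, hscale]
  exact_mod_cast hlt
end
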